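/- arXiv:1603.00109 — 2 statements merged into one kernel-verified Lean document; each statement's English description precedes it below -/
import Mathlib

section
/- The two-sided ideal I = ⟨1−yx⟩ of R = K⟨x,y⟩/(xy−1) is the unique minimal nonzero two-sided ideal of R: every nonzero two-sided ideal of R contains I. -/
noncomputable section

/-- The defining relation of the Toeplitz/Jacobson algebra: `x * y = 1`. -/
inductive ToeplitzRel (K : Type*) [Field K] :
    FreeAlgebra K (Fin 2) → FreeAlgebra K (Fin 2) → Prop
  | rel : ToeplitzRel K (FreeAlgebra.ι K 0 * FreeAlgebra.ι K 1) 1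

/-- The Toeplitz/Jacobson algebra `R = K⟨x,y⟩/(xy-1)`. -/
abbrev Toeplitz (K : Type*) [Field K] := RingQuot (ToeplitzRel K)

variable (K : Type*) [Field K]

/-- The image of the generator `x` in `R`. -/
def tx : Toeplitz K := RingQuot.mkAlgHom K (ToeplitzRel K) (FreeAlgebra.ι K 0)

/-- The image of the generator `y` in `R`. -/
def ty : Toeplitz K := RingQuot.mkAlgHom K (ToeplitzRel K) (FreeAlgebra.ι K 1)

/-- `f n = y^(n-1) x^(n-1) - y^n x^n`. -/
def tf (n : ℕ) : Toeplitz K := ty K ^ (n-1) * tx K ^ (n-1) - ty K ^ n * tx K ^ n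

def te : Toeplitz K := 1 - ty K * tx K

lemma hxy : tx K * ty K = 1 := by
  have := RingQuot.mkAlgHom_rel K (ToeplitzRel.rel (K := K))
  simpa [tx, ty, map_mul, map_one] using this

lemma hxyz (z : Toeplitz K) : tx K * (ty K * z) = z := by
  rw [← mul_assoc, hxy, one_mul]

lemma xnynz (n : ℕ) (z : Toeplitz K) : tx K ^ n * (ty K ^ n * z) = z := by
  induction n with
  | zero => simp
  | succ n ih =>
    rw [pow_succ, pow_succ']
    simp only [mul_assoc]
    rw [hxyz, ih]

lemma xaybz_ge {a b : ℕ} (h : b ≤ a) (z : Toeplitz K) :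
    tx K ^ a * (ty K ^ b * z) = tx K ^ (a - b) * z := by
  have ha : a = (a - b) + b := by omega
  rw [ha, pow_add]
  simp only [mul_assoc, xnynz]
  congr 2
  omega

lemma xaybz_le {a b : ℕ} (h : a ≤ b) (z : Toeplitz K) :
    tx K ^ a * (ty K ^ b * z) = ty K ^ (b - a) * z := by
  have hb : b = a + (b - a) := by omega
  rw [hb, pow_add]
  simp only [mul_assoc, xnynz]
  congr 2
  omega

lemma hxe : tx K * te K = 0 := by
  rw [te, mul_sub, mul_one, ← mul_assoc, hxy, one_mul, sub_self]

lemma hey (z : Toeplitz K) : te K * (ty K * z) = 0 := by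
  rw [← mul_assoc, te, sub_mul, one_mul, mul_assoc (ty K), hxy, mul_one, sub_self, zero_mul]

lemma hee : te K * te K = te K := by
  nth_rewrite 1 [te]
  rw [sub_mul, one_mul, mul_assoc, hxe, mul_zero, sub_zero]

lemma key (a b : ℕ) :
    te K * (tx K ^ a * (ty K ^ b * te K)) = if a = b then te K else 0 := by
  rcases lt_trichotomy a b with h | h | h
  · rw [xaybz_le K h.le, if_neg h.ne]
    have : b - a = (b - a - 1) + 1 := by omega
    rw [this, pow_succ', mul_assoc, hey]
  · subst h
    rw [xnynz, hee, if_pos rfl]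
  · rw [xaybz_ge K h.le, if_neg h.ne']
    have : a - b = (a - b - 1) + 1 := by omega
    rw [this, pow_succ, mul_assoc, hxe, mul_zero, mul_zero]

lemma term (i j p q : ℕ) :
    te K * (tx K ^ i * (ty K ^ p * (tx K ^ q * (ty K ^ j * te K)))) =
      if p ≤ i ∧ i + q = j + p then te K else 0 := by
  rcases lt_or_ge i p with h | h
  · rw [xaybz_le K h.le, if_neg (by omega)]
    have : p - i = (p - i - 1) + 1 := by omega
    rw [this, pow_succ', mul_assoc, hey]
  · rw [xaybz_ge K h, ← mul_assoc (tx K ^ (i - p)) (tx K ^ q), ← pow_add, key]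
    by_cases hc : p ≤ i ∧ i + q = j + p
    · rw [if_pos (by omega), if_pos hc]
    · rw [if_neg (by omega), if_neg hc]

def tv (p : ℕ × ℕ) : Toeplitz K := ty K ^ p.1 * tx K ^ p.2

lemma tv_mul (p q : ℕ × ℕ) : ∃ r, tv K p * tv K q = tv K r := by
  obtain ⟨i, j⟩ := p
  obtain ⟨k, l⟩ := q
  rcases le_or_gt j k with h | h
  · refine ⟨(i + (k - j), l), ?_⟩
    simp only [tv, mul_assoc]
    rw [xaybz_le K h (tx K ^ l), ← mul_assoc, ← pow_add]
  · refine ⟨(i, j - k + l), ?_⟩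
    simp only [tv, mul_assoc]
    rw [xaybz_ge K h.le (tx K ^ l), ← pow_add]

lemma mem_range_tv_of_closure {z : Toeplitz K}
    (hz : z ∈ Submonoid.closure {tx K, ty K}) : z ∈ Set.range (tv K) := by
  induction hz using Submonoid.closure_induction with
  | mem w hw =>
    rcases hw with h | h
    · exact ⟨(0, 1), by simp [tv, h]⟩
    · exact ⟨(1, 0), by simp [tv, show w = ty K from h]⟩
  | one => exact ⟨(0, 0), by simp [tv]⟩
  | mul x y hx hy ihx ihy =>
    obtain ⟨p, rfl⟩ := ihx
    obtain ⟨q, rfl⟩ := ihy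
    obtain ⟨r, hr⟩ := tv_mul K p q
    exact ⟨r, hr.symm⟩

lemma adjoin_top : Algebra.adjoin K {tx K, ty K} = ⊤ := by
  rw [eq_top_iff]
  rintro z -
  obtain ⟨w, rfl⟩ := RingQuot.mkAlgHom_surjective K (ToeplitzRel K) z
  induction w using FreeAlgebra.induction with
  | grade0 r =>
    rw [AlgHom.commutes]
    exact Subalgebra.algebraMap_mem _ r
  | grade1 i =>
    fin_cases i
    · exact Algebra.subset_adjoin (Set.mem_insert _ _)
    · exact Algebra.subset_adjoin (Set.mem_insert_of_mem _ rfl)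
  | mul a b ha hb => rw [map_mul]; exact mul_mem ha hb
  | add a b ha hb => rw [map_add]; exact add_mem ha hb

lemma mem_span_tv (z : Toeplitz K) : z ∈ Submodule.span K (Set.range (tv K)) := by
  have h1 : z ∈ Subalgebra.toSubmodule (Algebra.adjoin K {tx K, ty K}) := by
    rw [adjoin_top]; trivial
  rw [Algebra.adjoin_eq_span] at h1
  refine Submodule.span_mono ?_ h1
  intro w hw
  exact mem_range_tv_of_closure K hw

lemma key_sum (J : TwoSidedIdeal (Toeplitz K)) {a : Toeplitz K} (haJ : a ∈ J) (ha0 : a ≠ 0) :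
    te K ∈ J := by
  obtain ⟨c, hc⟩ := Finsupp.mem_span_range_iff_exists_finsupp.mp (mem_span_tv K a)
  have hcne : c ≠ 0 := by
    rintro rfl
    rw [Finsupp.sum_zero_index] at hc
    exact ha0 hc.symm
  obtain ⟨⟨i, j⟩, hij, hmin⟩ :=
    c.support.exists_min_image (fun p => p.1 + p.2)
      (Finsupp.support_nonempty_iff.mpr hcne)
  have hc0 : c (i, j) ≠ 0 := Finsupp.mem_support_iff.mp hij
  have hkey : te K * (tx K ^ i * (a * (ty K ^ j * te K))) = c (i, j) • te K := by
    rw [← hc, Finsupp.sum]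
    simp only [Finset.sum_mul, Finset.mul_sum, smul_mul_assoc, mul_smul_comm]
    rw [Finset.sum_eq_single (i, j)]
    · simp only [tv, mul_assoc]
      rw [term]
      rw [if_pos ⟨le_refl i, by omega⟩]
    · rintro ⟨p, q⟩ hmem hne
      simp only [tv, mul_assoc]
      rw [term]
      rw [if_neg, smul_zero]
      rintro ⟨h1, h2⟩
      have := hmin (p, q) hmem
      simp only at this
      exact hne (by ext <;> simp <;> omega)
    · intro h
      exact absurd hij h
  have h1 : te K * (tx K ^ i * (a * (ty K ^ j * te K))) ∈ J :=
    J.mul_mem_left _ _ (J.mul_mem_left _ _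
      (J.mul_mem_right _ _ haJ))
  rw [hkey] at h1
  have h2 : te K = (c (i, j))⁻¹ • (c (i, j) • te K) := by
    rw [smul_smul, inv_mul_cancel₀ hc0, one_smul]
  rw [h2, Algebra.smul_def]
  exact J.mul_mem_left _ _ h1


/-- `I = ⟨1-yx⟩` is the unique minimal nonzero two-sided ideal of `R`: every nonzero
two-sided ideal of `R` contains `I`. -/
theorem toeplitz_socle_unique_minimal
    (J : TwoSidedIdeal (Toeplitz K)) (hJ : J ≠ ⊥) :
    TwoSidedIdeal.span {1 - ty K * tx K} ≤ J := by
  obtain ⟨a, haJ, ha0⟩ : ∃ a ∈ J, a ≠ 0 := by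
    by_contra h
    push_neg at h
    exact hJ (eq_bot_iff.mpr fun x hx => (TwoSidedIdeal.mem_bot _).mpr (h x hx))
  have he : te K ∈ J := key_sum K J haJ ha0
  intro z hz
  exact TwoSidedIdeal.mem_span_iff.mp hz J (by
    intro w hw
    rw [Set.mem_singleton_iff] at hw
    subst hw
    exact he)
end
end

section
/- Let R = K⟨x,y⟩/(xy−1), p a nonzero polynomial in x of degree d, and p*(y) = p(x)y^d. Then R/Rp* is isomorphic as a left R-module to K[X,X^{-1}]/(p), the quotient of the Laurent polynomials by the ideal generated by p, regarded as an R-module via R → R/I ≅ K[X,X^{-1}]. -/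
noncomputable section

variable (K : Type*) [Field K]

/-!
Write `e = 1 - y x`, so that `e y = 0`. Since `p* = ∑ αᵢ y^(d-i)` has constant term
`α_d ≠ 0`, expanding `e x^b p*` shows `α_d e x^b ∈ Rp*` modulo the `e x^c` with `c < b`; by
induction `e x^b ∈ Rp*`, and as `R` is spanned by the `y^a x^b`, `e R ⊆ Rp*`. Hence `y x` acts
as the identity on `R/Rp*`, so `x` acts invertibly and the `R`-action factors through `φ`:
`ker φ ⊆ Rp*`. As `x^d p* = p(x)`, the surjection `r ↦ φ r mod p` has kernel exactly `Rp*`.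
-/

namespace Toeplitz

variable {K}

open Polynomial LaurentPolynomial

theorem tx_mul_ty : tx K * ty K = 1 := by
  simpa [tx, ty] using RingQuot.mkAlgHom_rel K (ToeplitzRel.rel (K := K))

theorem tx_pow_mul_ty_pow (k : ℕ) : tx K ^ k * ty K ^ k = 1 := by
  induction k with
  | zero => simp
  | succ k ih =>
    rw [pow_succ, pow_succ', mul_assoc, ← mul_assoc (tx K), tx_mul_ty, one_mul, ih]

theorem tx_pow_mul_ty_pow_of_le {a b : ℕ} (h : a ≤ b) :
    tx K ^ a * ty K ^ b = ty K ^ (b - a) := by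
  conv_lhs => rw [← Nat.add_sub_cancel' h, pow_add, ← mul_assoc, tx_pow_mul_ty_pow, one_mul]

theorem tx_pow_mul_ty_pow_of_ge {a b : ℕ} (h : b ≤ a) :
    tx K ^ a * ty K ^ b = tx K ^ (a - b) := by
  conv_lhs => rw [← Nat.sub_add_cancel h, pow_add, mul_assoc, tx_pow_mul_ty_pow, mul_one]

theorem adjoin_tx_ty : Algebra.adjoin K {tx K, ty K} = ⊤ := by
  rw [← (AlgHom.range_eq_top _).mpr (RingQuot.mkAlgHom_surjective K (ToeplitzRel K)),
    ← Algebra.map_top, ← FreeAlgebra.adjoin_range_ι, AlgHom.map_adjoin, ← Set.range_comp]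
  congr 1
  ext r
  simp [Fin.exists_fin_two, tx, ty, eq_comm]

theorem algHom_ext {A : Type*} [Semiring A] [Algebra K A] {f g : Toeplitz K →ₐ[K] A}
    (hx : f (tx K) = g (tx K)) (hy : f (ty K) = g (ty K)) : f = g :=
  AlgHom.ext_of_adjoin_eq_top adjoin_tx_ty (by rintro _ (rfl | rfl) <;> assumption)

theorem span_ty_pow_mul_tx_pow_eq_top :
    Submodule.span K (Set.range fun ab : ℕ × ℕ => ty K ^ ab.1 * tx K ^ ab.2) = ⊤ := by
  refine eq_top_iff.mpr (le_trans ?_ (Submodule.span_mono (s := Submonoid.closure {tx K, ty K}) ?_))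
  · rw [← Algebra.adjoin_eq_span, adjoin_tx_ty, Algebra.top_toSubmodule]
  · intro r hr
    induction hr using Submonoid.closure_induction_left with
    | one => exact ⟨(0, 0), by simp⟩
    | mul_left g hg r _ ih =>
      obtain ⟨⟨a, b⟩, rfl⟩ := ih
      rcases hg with rfl | rfl
      · cases a with
        | zero => exact ⟨(0, b + 1), by simp [pow_succ']⟩
        | succ a => exact ⟨(a, b), by simp [pow_succ', ← mul_assoc, tx_mul_ty]⟩
      · exact ⟨(a + 1, b), by simp [pow_succ', mul_assoc]⟩

def pstar (p : K[X]) : Toeplitz K := aeval (tx K) p * ty K ^ p.natDegree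

theorem pstar_eq_sum (p : K[X]) :
    pstar p = ∑ i ∈ Finset.range (p.natDegree + 1), p.coeff i • ty K ^ (p.natDegree - i) := by
  rw [pstar, aeval_eq_sum_range, Finset.sum_mul]
  refine Finset.sum_congr rfl fun i hi => ?_
  rw [smul_mul_assoc, tx_pow_mul_ty_pow_of_le (Finset.mem_range_succ_iff.mp hi)]

theorem tx_pow_natDegree_mul_pstar (p : K[X]) :
    tx K ^ p.natDegree * pstar p = aeval (tx K) p := by
  have hc : Commute (tx K ^ p.natDegree) (aeval (tx K) p) := by
    simpa using (commute_X_pow p p.natDegree).map (aeval (tx K))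
  rw [pstar, ← mul_assoc, hc.eq, mul_assoc, tx_pow_mul_ty_pow, mul_one]

theorem one_sub_ty_mul_tx_mul_ty : (1 - ty K * tx K) * ty K = 0 := by
  rw [sub_mul, one_mul, mul_assoc, tx_mul_ty, mul_one, sub_self]

theorem one_sub_ty_mul_tx_mul_tx_pow_mul_ty_pow (b k : ℕ) :
    (1 - ty K * tx K) * tx K ^ b * ty K ^ k =
      if k ≤ b then (1 - ty K * tx K) * tx K ^ (b - k) else 0 := by
  split_ifs with h
  · rw [mul_assoc, tx_pow_mul_ty_pow_of_ge h]
  · rw [mul_assoc, tx_pow_mul_ty_pow_of_le (by omega),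
      ← Nat.sub_add_cancel (show 1 ≤ k - b by omega), pow_succ', ← mul_assoc,
      one_sub_ty_mul_tx_mul_ty, zero_mul]

variable {p : K[X]}

theorem one_sub_ty_mul_tx_mul_tx_pow_mem (hp : p ≠ 0) (b : ℕ) :
    (1 - ty K * tx K) * tx K ^ b ∈ Submodule.span (Toeplitz K) {pstar p} := by
  induction b using Nat.strong_induction_on with
  | _ b ih =>
  set N := Submodule.span (Toeplitz K) {pstar p}
  set d := p.natDegree
  have hexpand : (1 - ty K * tx K) * tx K ^ b * pstar p =
      (∑ i ∈ Finset.range d, p.coeff i •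
        if d - i ≤ b then (1 - ty K * tx K) * tx K ^ (b - (d - i)) else 0) +
      p.leadingCoeff • ((1 - ty K * tx K) * tx K ^ b) := by
    rw [pstar_eq_sum, Finset.sum_range_succ, mul_add, Finset.mul_sum, coeff_natDegree,
      Nat.sub_self, pow_zero, mul_smul_comm, mul_one]
    congr 1
    refine Finset.sum_congr rfl fun i _ => ?_
    rw [mul_smul_comm, one_sub_ty_mul_tx_mul_tx_pow_mul_ty_pow]
  have hlow : (∑ i ∈ Finset.range d, p.coeff i •
      if d - i ≤ b then (1 - ty K * tx K) * tx K ^ (b - (d - i)) else 0) ∈ N := by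
    refine Submodule.sum_mem _ fun i hi => ?_
    split_ifs with h
    · exact N.smul_of_tower_mem _ (ih _ (by simp at hi; omega))
    · rw [smul_zero]; exact N.zero_mem
  have hlead : p.leadingCoeff • ((1 - ty K * tx K) * tx K ^ b) ∈ N := by
    have h := N.smul_mem ((1 - ty K * tx K) * tx K ^ b) (Submodule.mem_span_singleton_self _)
    rw [smul_eq_mul, hexpand] at h
    exact (N.add_mem_iff_right hlow).mp h
  simpa [hp] using N.smul_of_tower_mem p.leadingCoeff⁻¹ hlead

theorem one_sub_ty_mul_tx_mul_mem (hp : p ≠ 0) (r : Toeplitz K) :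
    (1 - ty K * tx K) * r ∈ Submodule.span (Toeplitz K) {pstar p} := by
  have hr := (Submodule.eq_top_iff'.mp span_ty_pow_mul_tx_pow_eq_top) r
  induction hr using Submodule.span_induction with
  | mem _ h =>
    obtain ⟨⟨a, b⟩, rfl⟩ := h
    dsimp only
    cases a with
    | zero => simpa using one_sub_ty_mul_tx_mul_tx_pow_mem hp b
    | succ a =>
      rw [pow_succ', mul_assoc, ← mul_assoc, one_sub_ty_mul_tx_mul_ty, zero_mul]
      exact zero_mem _
  | zero => simp
  | add _ _ _ _ h₁ h₂ => rw [mul_add]; exact add_mem h₁ h₂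
  | smul c _ _ h => rw [mul_smul_comm]; exact Submodule.smul_of_tower_mem _ c h

section LaurentAction

variable {M : Type*} [AddCommGroup M] [Module K M] [Module (Toeplitz K) M]
  [IsScalarTower K (Toeplitz K) M]

def txUnit (h : ∀ m : M, (ty K * tx K) • m = m) : (Module.End K M)ˣ where
  val := Algebra.lsmul K K M (tx K)
  inv := Algebra.lsmul K K M (ty K)
  val_inv := by rw [← map_mul, tx_mul_ty, map_one]
  inv_val := by ext m; simp [← mul_smul, h]

def laurentAction (h : ∀ m : M, (ty K * tx K) • m = m) :
    LaurentPolynomial K →ₐ[K] Module.End K M :=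
  AddMonoidAlgebra.lift K _ ℤ ((Units.coeHom _).comp (zpowersHom _ (txUnit h)))

theorem laurentAction_T (h : ∀ m : M, (ty K * tx K) • m = m) (n : ℤ) :
    laurentAction h (T n) = ↑(txUnit h ^ n) := by
  rw [laurentAction, T, AddMonoidAlgebra.lift_single]
  simp

theorem laurentAction_comp (h : ∀ m : M, (ty K * tx K) • m = m)
    (φ : Toeplitz K →ₐ[K] LaurentPolynomial K)
    (hx : φ (tx K) = T 1) (hy : φ (ty K) = T (-1)) :
    (laurentAction h).comp φ = Algebra.lsmul K K M := by
  refine algHom_ext ?_ ?_ <;> simp [hx, hy, laurentAction_T, txUnit]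

end LaurentAction

section LaurentMap

variable {p : K[X]} (φ : Toeplitz K →ₐ[K] LaurentPolynomial K)
  (hx : φ (tx K) = T 1) (hy : φ (ty K) = T (-1))
include hx

theorem map_aeval_tx (f : K[X]) : φ (aeval (tx K) f) = toLaurent f := by
  rw [← aeval_algHom_apply, hx, ← Polynomial.toLaurent_X, ← toLaurentAlg_apply,
    aeval_algHom_apply, aeval_X_left_apply, toLaurentAlg_apply]

include hy

theorem map_surjective : Function.Surjective φ := by
  intro z
  obtain ⟨n, f, hf⟩ := z.exists_T_pow
  refine ⟨aeval (tx K) f * ty K ^ n, ?_⟩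
  rw [map_mul, map_pow, hy, T_pow, map_aeval_tx φ hx, hf, mul_assoc, ← T_add]
  simp

theorem map_pstar : φ (pstar p) = toLaurent p * T (-p.natDegree) := by
  rw [pstar, map_mul, map_pow, hy, T_pow, map_aeval_tx φ hx, mul_neg_one]

theorem mem_span_pstar_of_map_eq_zero (hp : p ≠ 0) {r : Toeplitz K} (hr : φ r = 0) :
    r ∈ Submodule.span (Toeplitz K) {pstar p} := by
  set N := Submodule.span (Toeplitz K) {pstar p}
  have h : ∀ m : Toeplitz K ⧸ N, (ty K * tx K) • m = m := by
    intro m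
    obtain ⟨s, rfl⟩ := N.mkQ_surjective m
    have hs := one_sub_ty_mul_tx_mul_mem hp s
    rw [sub_mul, one_mul] at hs
    exact ((Submodule.Quotient.eq N).mpr hs).symm
  have hact : r • Submodule.Quotient.mk 1 = (0 : Toeplitz K ⧸ N) := by
    simpa [hr] using
      (LinearMap.congr_fun (AlgHom.congr_fun (laurentAction_comp h φ hx hy) r) (N.mkQ 1)).symm
  rwa [← Submodule.Quotient.mk_smul, smul_eq_mul, mul_one, Submodule.Quotient.mk_eq_zero] at hact

theorem mem_span_pstar_iff (hp : p ≠ 0) (r : Toeplitz K) :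
    r ∈ Submodule.span (Toeplitz K) {pstar p} ↔ φ r ∈ Ideal.span {toLaurent p} := by
  constructor
  · intro hr
    obtain ⟨c, rfl⟩ := Submodule.mem_span_singleton.mp hr
    rw [smul_eq_mul, map_mul, map_pstar φ hx hy, mul_comm (toLaurent p), ← mul_assoc]
    exact Ideal.mul_mem_left _ _ (Ideal.mem_span_singleton_self _)
  · intro hr
    obtain ⟨a, ha⟩ := Ideal.mem_span_singleton'.mp hr
    obtain ⟨s, rfl⟩ := map_surjective φ hx hy a
    -- `s x^d p* = s p(x)` lies in the ideal and has the same image as `r`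
    have hker : φ (r - s * tx K ^ p.natDegree * pstar p) = 0 := by
      rw [map_sub, mul_assoc, tx_pow_natDegree_mul_pstar, map_mul, map_aeval_tx φ hx, ha, sub_self]
    have h := add_mem (mem_span_pstar_of_map_eq_zero φ hx hy hp hker)
      (Submodule.smul_mem _ (s * tx K ^ p.natDegree) (Submodule.mem_span_singleton_self (pstar p)))
    rwa [smul_eq_mul, sub_add_cancel] at h

end LaurentMap

end Toeplitz

/-- For a nonzero polynomial `p` of degree `d` and `p*(y) = p(x) y^d`, the left
`R`-module `R/Rp*` is isomorphic to `K[X,X⁻¹]/(p)`, where the `R`-action on the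
latter is via the map `R → R/I ≅ K[X,X⁻¹]`, `x ↦ X`, `y ↦ X⁻¹`. -/
theorem toeplitz_quotient_pstar (p : Polynomial K) (hp : p ≠ 0)
    (φ : Toeplitz K →ₐ[K] LaurentPolynomial K)
    (hx : φ (tx K) = LaurentPolynomial.T 1)
    (hy : φ (ty K) = LaurentPolynomial.T (-1)) :
    ∃ e : (Toeplitz K ⧸ Submodule.span (Toeplitz K)
            {Polynomial.aeval (tx K) p * ty K ^ p.natDegree}) ≃+
          (LaurentPolynomial K ⧸ Ideal.span {Polynomial.toLaurent p}),
      ∀ (r : Toeplitz K) (m : Toeplitz K ⧸ Submodule.span (Toeplitz K)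
            {Polynomial.aeval (tx K) p * ty K ^ p.natDegree}),
        e (r • m) = φ r • e m := by
  set I := Ideal.span {Polynomial.toLaurent p}
  let f : Toeplitz K →ₛₗ[φ.toRingHom] LaurentPolynomial K ⧸ I :=
    I.mkQ.comp φ.toRingHom.toSemilinearMap
  have hker : LinearMap.ker f = Submodule.span (Toeplitz K) {Toeplitz.pstar p} := by
    ext r
    exact (Submodule.Quotient.mk_eq_zero I).trans (Toeplitz.mem_span_pstar_iff φ hx hy hp r).symm
  let g := (Submodule.span (Toeplitz K) {Toeplitz.pstar p}).liftQ f hker.ge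
  have hsurj : Function.Surjective g := by
    intro w
    obtain ⟨z, rfl⟩ := I.mkQ_surjective w
    obtain ⟨r, rfl⟩ := Toeplitz.map_surjective φ hx hy z
    exact ⟨Submodule.Quotient.mk r, rfl⟩
  have hinj : Function.Injective g :=
    LinearMap.ker_eq_bot.mp (Submodule.ker_liftQ_eq_bot _ _ _ hker.le)
  exact ⟨AddEquiv.ofBijective g ⟨hinj, hsurj⟩, g.map_smulₛₗ⟩
end
end
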